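/- For half-integers j ≥ 0 and k ≥ 0, the difference of area eigenvalues ΔA(j,k) = √((j+k)(j+k+1)) − √(j(j+1)) satisfies ΔA(j,k) → k as j → ∞; more precisely, for all j > 0, |√((j+k)(j+k+1)) − √(j(j+1)) − k| ≤ k(k+1)/(2j). -/

import Mathlib

/-!
Write `s = √(j(j+1))` and `t = √((j+k)(j+k+1))`. Since `j ≤ s ≤ j + 1/2`, squaring shows
`s + k ≤ t`, and `t² - s² = k(2j+k+1)` together with `t + s ≥ 2j + k` gives
`t - s - k ≤ k / (2j + k)`. Hence `0 ≤ t - s - k ≤ k(k+1)/(2j)`, and the limit follows by squeezing.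
-/

open Filter

namespace Real

variable {x k : ℝ}

lemma le_sqrt_mul_add_one (hx : 0 ≤ x) : x ≤ √(x * (x + 1)) :=
  (le_sqrt hx (by positivity)).mpr (by nlinarith)

lemma sqrt_mul_add_one_le (hx : -1 / 2 ≤ x) : √(x * (x + 1)) ≤ x + 1 / 2 :=
  (sqrt_le_left (by linarith)).mpr (by nlinarith)

lemma sqrt_mul_add_one_add_le (hx : 0 ≤ x) (hk : 0 ≤ k) :
    √(x * (x + 1)) + k ≤ √((x + k) * (x + k + 1)) := by
  have hs_sq : √(x * (x + 1)) ^ 2 = x * (x + 1) := sq_sqrt (by positivity)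
  have hs_le := sqrt_mul_add_one_le (by linarith : -1 / 2 ≤ x)
  exact (le_sqrt (by positivity) (by positivity)).mpr (by nlinarith)

lemma sqrt_mul_add_one_sub_sub_le (hx : 0 ≤ x) (hk : 0 ≤ k) :
    √((x + k) * (x + k + 1)) - √(x * (x + 1)) - k ≤ k / (2 * x + k) := by
  set s := √(x * (x + 1))
  set t := √((x + k) * (x + k + 1))
  rcases (by positivity : 0 ≤ 2 * x + k).eq_or_lt with h | hpos
  · obtain ⟨rfl, rfl⟩ : x = 0 ∧ k = 0 := ⟨by linarith, by linarith⟩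
    simp [s, t]
  have hs_sq : s ^ 2 = x * (x + 1) := sq_sqrt (by positivity)
  have ht_sq : t ^ 2 = (x + k) * (x + k + 1) := sq_sqrt (by positivity)
  have hsum : 2 * x + k ≤ t + s := by
    linarith [le_sqrt_mul_add_one hx, le_sqrt_mul_add_one (add_nonneg hx hk)]
  -- `(t - s - k)(t + s) = k(2x+k+1) - k(t+s) ≤ k`
  have hprod : (t - s - k) * (t + s) ≤ k := by nlinarith
  rw [le_div_iff₀ hpos]
  nlinarith [sqrt_mul_add_one_add_le hx hk]

lemma abs_sqrt_mul_add_one_sub_sub_le (hk : 0 ≤ k) (hx : 0 < x) :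
    |√((x + k) * (x + k + 1)) - √(x * (x + 1)) - k| ≤ k * (k + 1) / (2 * x) := by
  have hlower : 0 ≤ √((x + k) * (x + k + 1)) - √(x * (x + 1)) - k := by
    linarith [sqrt_mul_add_one_add_le hx.le hk]
  rw [abs_of_nonneg hlower]
  calc _ ≤ k / (2 * x + k) := sqrt_mul_add_one_sub_sub_le hx.le hk
    _ ≤ k / (2 * x) := div_le_div_of_nonneg_left hk (by positivity) (by linarith)
    _ ≤ k * (k + 1) / (2 * x) := by gcongr; nlinarith

end Real

/-- The difference of area eigenvalues `ΔA(j,k) = √((j+k)(j+k+1)) − √(j(j+1))`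
tends to `k` as `j → ∞`; quantitatively, for `j > 0`,
`|√((j+k)(j+k+1)) − √(j(j+1)) − k| ≤ k(k+1)/(2j)`. -/
theorem area_difference_limit (k : ℝ) (hk : 0 ≤ k) :
    Tendsto (fun j : ℝ =>
        Real.sqrt ((j + k) * (j + k + 1)) - Real.sqrt (j * (j + 1)))
      atTop (nhds k) ∧
    ∀ j : ℝ, 0 < j →
      |Real.sqrt ((j + k) * (j + k + 1)) - Real.sqrt (j * (j + 1)) - k|
        ≤ k * (k + 1) / (2 * j) := by
  refine ⟨?_, fun j hj => Real.abs_sqrt_mul_add_one_sub_sub_le hk hj⟩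
  have hbound : Tendsto (fun j : ℝ => k * (k + 1) / (2 * j)) atTop (nhds 0) :=
    tendsto_const_nhds.div_atTop (tendsto_id.const_mul_atTop two_pos)
  rw [← tendsto_sub_nhds_zero_iff]
  refine squeeze_zero_norm' ?_ hbound
  filter_upwards [eventually_gt_atTop 0] with j hj
  exact Real.abs_sqrt_mul_add_one_sub_sub_le hk hj
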